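/- Let ℳ be a bounded operator on 𝒳, U,V⊂S disjoint with U≠∅, W=U∪V, λ,η∈ℂ nonzero, λ in the resolvent set of ℳ_{VV}. A functional ν∈𝒳* satisfies ℳ[U,V,λ]*ν(χ_U f)=ην(χ_U f), ν(χ_V f)=((λ/η)ℳ_{UV}(λI-ℳ_{VV})^{-1})*ν(f), and ν(χ_{S∖W}f)=0 for all f∈𝒳, if and only if (ℳ_{UW}+(η/λ)ℳ_{VW})*ν = ην. Moreover, η is an eigenvalue of ℳ[U,V,λ]* if and only if η is an eigenvalue of (ℳ_{UW}+(η/λ)ℳ_{VW})*. -/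

import Mathlib

/-!
Write `T = ℳ_UW + (η/λ) ℳ_VW`. As `χ_U + χ_V + χ_{S∖W} = 1`, the equation `ν ∘ T = η ν` splits into
its components on `U`, `V` and `S∖W`. The last one says `ν χ_{S∖W} = 0`, because `T` vanishes there.
On `V` it reads `ν ℳ_UV = (η/λ) ν χ_V (λI - ℳ_VV)`, i.e. `ν χ_V = (λ/η) ν ℳ_UV R` after composing
with the resolvent `R`. Substituting this into the `U` component turns `ℳ_UU + (η/λ) ℳ_VU` into the
Perron complement, since `R` commutes with `χ_V`. Nonzero eigenfunctionals of the two operators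
correspond through `ν ↦ ν χ_U` and `μ ↦ μ + (λ/η) μ ℳ_UV R`.
-/

open ContinuousLinearMap

section Ring

variable {A : Type*} [Ring A]

-- In the application `P, Q, K, N` are `χ_U, χ_V, χ_W, χ_{S∖W}`.
structure IsOrthogonalSplitting (P Q K N : A) : Prop where
  idem_fst : IsIdempotentElem P
  idem_snd : IsIdempotentElem Q
  mul_fst_snd : P * Q = 0
  mul_snd_fst : Q * P = 0
  add_eq : P + Q = K
  add_compl : K + N = 1

namespace IsOrthogonalSplitting

variable {P Q K N : A}

theorem of_disjoint {S : Type*} {e : Set S → A} (he : ∀ U V, e U * e V = e (U ∩ V))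
    (hbot : e ∅ = 0) (hadd : ∀ U V, Disjoint U V → e (U ∪ V) = e U + e V)
    (hcompl : ∀ U, e U + e Uᶜ = 1) {U V : Set S} (hUV : Disjoint U V) :
    IsOrthogonalSplitting (e U) (e V) (e (U ∪ V)) (e (U ∪ V)ᶜ) where
  idem_fst := by rw [IsIdempotentElem, he, Set.inter_self]
  idem_snd := by rw [IsIdempotentElem, he, Set.inter_self]
  mul_fst_snd := by rw [he, hUV.inter_eq, hbot]
  mul_snd_fst := by rw [he, hUV.symm.inter_eq, hbot]
  add_eq := (hadd U V hUV).symm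
  add_compl := hcompl _

theorem mul_fst (h : IsOrthogonalSplitting P Q K N) : K * P = P := by
  rw [← h.add_eq, add_mul, h.idem_fst.eq, h.mul_snd_fst, add_zero]

theorem mul_snd (h : IsOrthogonalSplitting P Q K N) : K * Q = Q := by
  rw [← h.add_eq, add_mul, h.idem_snd.eq, h.mul_fst_snd, zero_add]

theorem add_add_eq_one (h : IsOrthogonalSplitting P Q K N) : P + Q + N = 1 := by
  rw [h.add_eq, h.add_compl]

theorem fst_mul_compl (h : IsOrthogonalSplitting P Q K N) : P * N = 0 := by
  rw [eq_sub_of_add_eq' h.add_compl, ← h.add_eq, mul_sub, mul_one, mul_add, h.idem_fst.eq,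
    h.mul_fst_snd, add_zero, sub_self]

theorem snd_mul_compl (h : IsOrthogonalSplitting P Q K N) : Q * N = 0 := by
  rw [eq_sub_of_add_eq' h.add_compl, ← h.add_eq, mul_sub, mul_one, mul_add, h.idem_snd.eq,
    h.mul_snd_fst, zero_add, sub_self]

theorem mul_compl (h : IsOrthogonalSplitting P Q K N) : K * N = 0 := by
  rw [← h.add_eq, add_mul, h.fst_mul_compl, h.snd_mul_compl, add_zero]

end IsOrthogonalSplitting

-- `ℳ[U,V,λ]` for `P = χ_U`, `Q = χ_V` and `R = (λI - ℳ_VV)⁻¹`.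
def perronComplement (P Q M R : A) : A :=
  P * (M * P) + P * (M * Q) * (R * (Q * (M * P)))

theorem IsIdempotentElem.mul_perronComplement {P : A} (hP : IsIdempotentElem P) (Q M R : A) :
    P * perronComplement P Q M R = perronComplement P Q M R := by
  simp only [perronComplement, mul_add, ← mul_assoc, hP.eq]

theorem IsIdempotentElem.perronComplement_mul {P : A} (hP : IsIdempotentElem P) (Q M R : A) :
    perronComplement P Q M R * P = perronComplement P Q M R := by
  simp only [perronComplement, add_mul, mul_assoc, hP.eq]

theorem IsIdempotentElem.mul_mul_self_of_commute {Q R : A} (hQ : IsIdempotentElem Q)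
    (hQR : Commute Q R) : Q * R * Q = Q * R := by
  rw [mul_assoc, ← hQR.eq, ← mul_assoc, hQ.eq]

theorem IsIdempotentElem.commute_resolvent {𝕜 : Type*} [CommRing 𝕜] [Algebra 𝕜 A] {Q M R : A}
    {lam : 𝕜} (hQ : IsIdempotentElem Q) (hR1 : (lam • 1 - Q * (M * Q)) * R = 1)
    (hR2 : R * (lam • 1 - Q * (M * Q)) = 1) : Commute Q R := by
  have hD : Commute Q (lam • 1 - Q * (M * Q)) := by
    refine ((Commute.one_right Q).smul_right lam).sub_right ?_
    rw [Commute, SemiconjBy, ← mul_assoc, hQ.eq, mul_assoc, mul_assoc, hQ.eq]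
  exact Commute.units_inv_right (u := ⟨_, R, hR1, hR2⟩) hD

end Ring

section Functionals

variable {𝕜 E F : Type*} [NormedField 𝕜] [NormedAddCommGroup E] [NormedSpace 𝕜 E]
  [NormedAddCommGroup F] [NormedSpace 𝕜 F] {P Q K N M R : E →L[𝕜] E} {lam η : 𝕜}

theorem ContinuousLinearMap.eq_iff_comp_of_add_add_eq_one (h : P + Q + N = 1) {ν ν' : E →L[𝕜] F} :
    ν = ν' ↔ ν ∘L P = ν' ∘L P ∧ ν ∘L Q = ν' ∘L Q ∧ ν ∘L N = ν' ∘L N := by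
  refine ⟨by rintro rfl; simp, fun ⟨hP, hQ, hN⟩ => ?_⟩
  have hsplit : ∀ μ : E →L[𝕜] F, μ = μ ∘L P + μ ∘L Q + μ ∘L N := fun μ => by
    rw [← comp_add, ← comp_add, h, one_def, comp_id]
  rw [hsplit ν, hsplit ν', hP, hQ, hN]

theorem ContinuousLinearMap.comp_eq_iff_eq_comp_of_mul_eq_one {D : E →L[𝕜] E}
    (hDR : D * R = 1) (hRD : R * D = 1) {ν ν' : E →L[𝕜] F} : ν ∘L R = ν' ↔ ν = ν' ∘L D := by
  constructor <;> rintro rfl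
  · rw [comp_assoc, ← mul_def, hRD, one_def, comp_id]
  · rw [comp_assoc, ← mul_def, hDR, one_def, comp_id]

theorem dual_eigen_snd_component_iff (hQ : IsIdempotentElem Q) (hKQ : K * Q = Q) (hlam : lam ≠ 0)
    (hη : η ≠ 0) (hR1 : (lam • 1 - Q * (M * Q)) * R = 1) (hR2 : R * (lam • 1 - Q * (M * Q)) = 1)
    (ν : E →L[𝕜] F) :
    ν ∘L ((P * (M * K) + (η / lam) • (Q * (M * K))) * Q) = η • ν ∘L Q ↔
      ν ∘L Q = (lam / η) • ν ∘L (P * (M * Q)) ∘L R := by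
  have hTQ : (P * (M * K) + (η / lam) • (Q * (M * K))) * Q =
      P * (M * Q) + (η / lam) • (Q * (M * Q)) := by
    simp only [add_mul, smul_mul_assoc, mul_assoc, hKQ]
  have hQD : (η / lam) • (Q * (lam • 1 - Q * (M * Q))) =
      η • Q - (η / lam) • (Q * (M * Q)) := by
    rw [mul_sub, mul_smul_comm, mul_one, ← mul_assoc, hQ.eq, smul_sub, smul_smul,
      div_mul_cancel₀ _ hlam]
  have hYD : ((η / lam) • ν ∘L Q) ∘L (lam • 1 - Q * (M * Q)) =
      η • ν ∘L Q - (η / lam) • ν ∘L (Q * (M * Q)) := by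
    rw [smul_comp, comp_assoc, ← mul_def, ← comp_smul, hQD, comp_sub, comp_smul, comp_smul]
  calc ν ∘L ((P * (M * K) + (η / lam) • (Q * (M * K))) * Q) = η • ν ∘L Q
      ↔ ν ∘L (P * (M * Q)) = ((η / lam) • ν ∘L Q) ∘L (lam • 1 - Q * (M * Q)) := by
        rw [hTQ, hYD, comp_add, comp_smul, eq_sub_iff_add_eq]
    _ ↔ ν ∘L (P * (M * Q)) ∘L R = (η / lam) • ν ∘L Q :=
        (comp_eq_iff_eq_comp_of_mul_eq_one hR1 hR2).symm
    _ ↔ ν ∘L Q = (lam / η) • ν ∘L (P * (M * Q)) ∘L R := by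
        rw [eq_comm, ← inv_div, inv_smul_eq_iff₀ (div_ne_zero hlam hη)]

theorem dual_eigen_fst_component_iff (hP : IsIdempotentElem P) (hQ : IsIdempotentElem Q)
    (hKP : K * P = P) (hQR : Commute Q R) (hlam : lam ≠ 0) (hη : η ≠ 0) {ν : E →L[𝕜] F}
    (hV : ν ∘L Q = (lam / η) • ν ∘L (P * (M * Q)) ∘L R) :
    ν ∘L ((P * (M * K) + (η / lam) • (Q * (M * K))) * P) = η • ν ∘L P ↔
      ν ∘L (perronComplement P Q M R * P) = η • ν ∘L P := by
  have hPC : perronComplement P Q M R = P * (M * P) + P * (M * Q) * R * (M * P) := by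
    rw [perronComplement, show P * (M * Q) * (R * (Q * (M * P))) = P * M * (Q * R * Q) * (M * P) by
      simp only [mul_assoc], hQ.mul_mul_self_of_commute hQR]
    simp only [mul_assoc]
  suffices ν ∘L ((P * (M * K) + (η / lam) • (Q * (M * K))) * P) =
      ν ∘L (perronComplement P Q M R * P) by rw [this]
  calc ν ∘L ((P * (M * K) + (η / lam) • (Q * (M * K))) * P)
      = ν ∘L (P * (M * P)) + (η / lam) • (ν ∘L Q) ∘L (M * P) := by
        simp only [add_mul, smul_mul_assoc, mul_assoc, hKP, comp_add, comp_smul]; rfl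
    _ = ν ∘L (P * (M * P)) + ν ∘L (P * (M * Q) * R * (M * P)) := by
        rw [hV, smul_comp, smul_smul, div_mul_div_cancel₀ hlam, div_self hη, one_smul]; rfl
    _ = ν ∘L (perronComplement P Q M R * P) := by
        rw [hP.perronComplement_mul, hPC, comp_add]

theorem dual_eigen_compl_component_iff (hKN : K * N = 0) (hη : η ≠ 0) (c : 𝕜) (ν : E →L[𝕜] F) :
    ν ∘L ((P * (M * K) + c • (Q * (M * K))) * N) = η • ν ∘L N ↔ ν ∘L N = 0 := by
  have hTN : (P * (M * K) + c • (Q * (M * K))) * N = 0 := by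
    simp only [add_mul, smul_mul_assoc, mul_assoc, hKN, mul_zero, smul_zero, add_zero]
  rw [hTN, comp_zero, eq_comm, smul_eq_zero_iff_right hη]

theorem perronComplement_dual_eigen_iff (hs : IsOrthogonalSplitting P Q K N) (hlam : lam ≠ 0)
    (hη : η ≠ 0) (hR1 : (lam • 1 - Q * (M * Q)) * R = 1)
    (hR2 : R * (lam • 1 - Q * (M * Q)) = 1) (ν : E →L[𝕜] F) :
    (ν ∘L (perronComplement P Q M R * P) = η • ν ∘L P ∧
        ν ∘L Q = (lam / η) • ν ∘L (P * (M * Q)) ∘L R ∧ ν ∘L N = 0) ↔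
      ν ∘L (P * (M * K) + (η / lam) • (Q * (M * K))) = η • ν := by
  have hU := dual_eigen_fst_component_iff hs.idem_fst hs.idem_snd hs.mul_fst
    (hs.idem_snd.commute_resolvent hR1 hR2) hlam hη (M := M) (ν := ν)
  have hV := dual_eigen_snd_component_iff (P := P) hs.idem_snd hs.mul_snd hlam hη hR1 hR2 ν
  have hN := dual_eigen_compl_component_iff (P := P) (Q := Q) (M := M) hs.mul_compl hη (η / lam) ν
  conv_rhs => rw [eq_iff_comp_of_add_add_eq_one hs.add_add_eq_one, smul_comp, smul_comp, smul_comp]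
  constructor
  · rintro ⟨hpc, hv, hn⟩
    exact ⟨(hU hv).2 hpc, hV.2 hv, hN.2 hn⟩
  · rintro ⟨hp, hq, hn⟩
    have hv := hV.1 hq
    exact ⟨(hU hv).1 hp, hv, hN.1 hn⟩

theorem comp_eq_self_of_comp_perronComplement_eq_smul (hP : IsIdempotentElem P) (hη : η ≠ 0)
    {μ : E →L[𝕜] F} (hμ : μ ∘L perronComplement P Q M R = η • μ) : μ ∘L P = μ :=
  calc μ ∘L P = η⁻¹ • (η • μ) ∘L P := by rw [smul_comp, inv_smul_smul₀ hη]
    _ = η⁻¹ • μ ∘L (perronComplement P Q M R * P) := by rw [← hμ]; rfl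
    _ = μ := by rw [hP.perronComplement_mul, hμ, inv_smul_smul₀ hη]

-- `ν` is `μ` plus the `V`-component forced by `perronComplement_dual_eigen_iff`.
theorem dual_eigen_of_perronComplement_dual_eigen (hs : IsOrthogonalSplitting P Q K N)
    (hlam : lam ≠ 0) (hη : η ≠ 0) (hR1 : (lam • 1 - Q * (M * Q)) * R = 1)
    (hR2 : R * (lam • 1 - Q * (M * Q)) = 1) {μ : E →L[𝕜] F}
    (hμ : μ ∘L perronComplement P Q M R = η • μ) :
    let ν := μ + (lam / η) • μ ∘L (P * (M * Q) * R)
    ν ∘L P = μ ∧ ν ∘L (P * (M * K) + (η / lam) • (Q * (M * K))) = η • ν := by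
  intro ν
  set X := P * (M * Q) * R
  have hXQ : X * Q = X := by
    rw [show X * Q = P * M * (Q * R * Q) by simp only [X, mul_assoc],
      hs.idem_snd.mul_mul_self_of_commute (hs.idem_snd.commute_resolvent hR1 hR2)]
    simp only [X, mul_assoc]
  have hPX : P * X = X := by simp only [X, ← mul_assoc, hs.idem_fst.eq]
  have hXP : X * P = 0 := by rw [← hXQ, mul_assoc, hs.mul_snd_fst, mul_zero]
  have hXN : X * N = 0 := by rw [← hXQ, mul_assoc, hs.snd_mul_compl, mul_zero]
  have hμP := comp_eq_self_of_comp_perronComplement_eq_smul hs.idem_fst hη hμ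
  have hν : ∀ Y, P * Y = Y → ν ∘L Y = μ ∘L Y := fun Y hY => by
    rw [add_comp, smul_comp, comp_assoc, ← mul_def, ← hY, ← mul_assoc, hXP, zero_mul, comp_zero,
      smul_zero, add_zero]
  have hνP : ν ∘L P = μ := by rw [hν P hs.idem_fst.eq, hμP]
  refine ⟨hνP, (perronComplement_dual_eigen_iff hs hlam hη hR1 hR2 ν).1 ⟨?_, ?_, ?_⟩⟩
  · rw [hν _ (by rw [← mul_assoc, hs.idem_fst.mul_perronComplement]), hνP,
      hs.idem_fst.perronComplement_mul, hμ]
  · have hμQ : μ ∘L Q = 0 := by rw [← hμP, comp_assoc, ← mul_def, hs.mul_fst_snd, comp_zero]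
    rw [show ν ∘L (P * (M * Q)) ∘L R = ν ∘L X from rfl, hν X hPX, add_comp, smul_comp,
      comp_assoc, ← mul_def, hXQ, hμQ, zero_add]
  · rw [add_comp, smul_comp, comp_assoc, ← mul_def, hXN, comp_zero, smul_zero, add_zero, ← hμP,
      comp_assoc, ← mul_def, hs.fst_mul_compl, comp_zero]

theorem exists_perronComplement_dual_eigen_iff (hs : IsOrthogonalSplitting P Q K N)
    (hlam : lam ≠ 0) (hη : η ≠ 0) (hR1 : (lam • 1 - Q * (M * Q)) * R = 1)
    (hR2 : R * (lam • 1 - Q * (M * Q)) = 1) :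
    (∃ μ : E →L[𝕜] F, μ ≠ 0 ∧ μ ∘L perronComplement P Q M R = η • μ) ↔
      ∃ ν : E →L[𝕜] F, ν ≠ 0 ∧ ν ∘L (P * (M * K) + (η / lam) • (Q * (M * K))) = η • ν := by
  constructor
  · rintro ⟨μ, hμ0, hμ⟩
    obtain ⟨hνP, hν⟩ := dual_eigen_of_perronComplement_dual_eigen hs hlam hη hR1 hR2 hμ
    exact ⟨_, fun h0 => hμ0 (by rw [← hνP, h0, zero_comp]), hν⟩
  · rintro ⟨ν, hν0, hν⟩
    obtain ⟨hpc, hv, hn⟩ := (perronComplement_dual_eigen_iff hs hlam hη hR1 hR2 ν).2 hν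
    refine ⟨ν ∘L P, fun h0 => hν0 ?_, ?_⟩
    · rw [eq_iff_comp_of_add_add_eq_one hs.add_add_eq_one]
      refine ⟨by rw [h0, zero_comp], ?_, by rw [hn, zero_comp]⟩
      rw [hv, show ν ∘L (P * (M * Q)) ∘L R = (ν ∘L P) ∘L (M * Q * R) from rfl, h0, zero_comp,
        smul_zero, zero_comp]
    · rw [comp_assoc, ← mul_def, hs.idem_fst.mul_perronComplement,
        ← hs.idem_fst.perronComplement_mul, hpc]

end Functionals

theorem stmt7_general {S 𝒳 : Type*} [NormedAddCommGroup 𝒳] [NormedSpace ℂ 𝒳]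
    (e : Set S → (𝒳 →L[ℂ] 𝒳))
    (he : ∀ U V : Set S, (e U) ∘L (e V) = e (U ∩ V))
    (hbot : e ∅ = 0)
    (hadd : ∀ U V : Set S, Disjoint U V → e (U ∪ V) = e U + e V)
    (hcompl : ∀ U : Set S, e U + e Uᶜ = 1)
    (ℳ : 𝒳 →L[ℂ] 𝒳) (U V : Set S) (hUV : Disjoint U V)
    (lam η : ℂ) (hlam : lam ≠ 0) (hη : η ≠ 0)
    (R : 𝒳 →L[ℂ] 𝒳)
    (hR1 : (lam • (1 : 𝒳 →L[ℂ] 𝒳) - (e V ∘L ℳ ∘L e V)) ∘L R = 1)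
    (hR2 : R ∘L (lam • (1 : 𝒳 →L[ℂ] 𝒳) - (e V ∘L ℳ ∘L e V)) = 1) :
    let W := U ∪ V
    let MUU := e U ∘L ℳ ∘L e U
    let MUV := e U ∘L ℳ ∘L e V
    let MVU := e V ∘L ℳ ∘L e U
    let MUW := e U ∘L ℳ ∘L e W
    let MVW := e V ∘L ℳ ∘L e W
    let PC := MUU + MUV ∘L (R ∘L MVU)
    (∀ ν : 𝒳 →L[ℂ] ℂ,
      ((∀ f : 𝒳, ν (PC (e U f)) = η * ν (e U f)) ∧
        (∀ f : 𝒳, ν (e V f) = (lam / η) * ν (MUV (R f))) ∧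
        (∀ f : 𝒳, ν (e Wᶜ f) = 0)) ↔
      (∀ f : 𝒳, ν ((MUW + (η / lam) • MVW) f) = η * ν f)) ∧
    ((∃ ν : 𝒳 →L[ℂ] ℂ, ν ≠ 0 ∧ ∀ f : 𝒳, ν (PC f) = η * ν f) ↔
      (∃ ν : 𝒳 →L[ℂ] ℂ, ν ≠ 0 ∧
        ∀ f : 𝒳, ν ((MUW + (η / lam) • MVW) f) = η * ν f)) := by
  intro W MUU MUV MVU MUW MVW PC
  have hs : IsOrthogonalSplitting (e U) (e V) (e W) (e Wᶜ) :=
    .of_disjoint he hbot hadd hcompl hUV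
  have hpart1 := perronComplement_dual_eigen_iff (F := ℂ) hs hlam hη hR1 hR2
  have hpart2 := exists_perronComplement_dual_eigen_iff (F := ℂ) hs hlam hη hR1 hR2
  simp only [ContinuousLinearMap.ext_iff, coe_comp, Function.comp_apply, FunLike.coe_smul,
    Pi.smul_apply, smul_eq_mul, zero_apply] at hpart1 hpart2
  exact ⟨hpart1, hpart2⟩

/-- Proposition `prop:PC_evalprop`(2): dual eigenvector correspondence for the Perron
complement `ℳ[U,V,λ] = ℳ_UU + ℳ_UV(λI-ℳ_VV)⁻¹ℳ_VU`. Here `R = (λI - ℳ_VV)⁻¹`,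
and adjoint conditions are stated pointwise: `(T*ν)(f) = ν(T f)`. -/
theorem stmt7 {S 𝒳 : Type*} [NormedAddCommGroup 𝒳] [NormedSpace ℂ 𝒳] [CompleteSpace 𝒳]
    (e : Set S → (𝒳 →L[ℂ] 𝒳))
    (he : ∀ U V : Set S, (e U) ∘L (e V) = e (U ∩ V))
    (hbot : e ∅ = 0)
    (hadd : ∀ U V : Set S, Disjoint U V → e (U ∪ V) = e U + e V)
    (hcompl : ∀ U : Set S, e U + e Uᶜ = 1)
    (ℳ : 𝒳 →L[ℂ] 𝒳) (U V : Set S) (hUV : Disjoint U V) (hU : U.Nonempty)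
    (lam η : ℂ) (hlam : lam ≠ 0) (hη : η ≠ 0)
    (R : 𝒳 →L[ℂ] 𝒳)
    (hR1 : (lam • (1 : 𝒳 →L[ℂ] 𝒳) - (e V ∘L ℳ ∘L e V)) ∘L R = 1)
    (hR2 : R ∘L (lam • (1 : 𝒳 →L[ℂ] 𝒳) - (e V ∘L ℳ ∘L e V)) = 1) :
    let W := U ∪ V
    let MUU := e U ∘L ℳ ∘L e U
    let MUV := e U ∘L ℳ ∘L e V
    let MVU := e V ∘L ℳ ∘L e U
    let MUW := e U ∘L ℳ ∘L e W
    let MVW := e V ∘L ℳ ∘L e W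
    let PC := MUU + MUV ∘L (R ∘L MVU)
    (∀ ν : 𝒳 →L[ℂ] ℂ,
      ((∀ f : 𝒳, ν (PC (e U f)) = η * ν (e U f)) ∧
        (∀ f : 𝒳, ν (e V f) = (lam / η) * ν (MUV (R f))) ∧
        (∀ f : 𝒳, ν (e Wᶜ f) = 0)) ↔
      (∀ f : 𝒳, ν ((MUW + (η / lam) • MVW) f) = η * ν f)) ∧
    ((∃ ν : 𝒳 →L[ℂ] ℂ, ν ≠ 0 ∧ ∀ f : 𝒳, ν (PC f) = η * ν f) ↔
      (∃ ν : 𝒳 →L[ℂ] ℂ, ν ≠ 0 ∧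
        ∀ f : 𝒳, ν ((MUW + (η / lam) • MVW) f) = η * ν f)) :=
  stmt7_general e he hbot hadd hcompl ℳ U V hUV lam η hlam hη R hR1 hR2
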